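/- For every α ∈ ℝ, the 2-form ω := α(e¹⁴ + e²⁵ + e³⁶) on ℝ⁶ satisfies λ((1/3)·dω) = −(1/27)·α⁴. (In particular λ((1/3)dω) < 0 for α ≠ 0, so there is no left-invariant nearly para-Kähler structure of non-zero type on Lie groups with Lie algebra 𝔰𝔲(2) ⊕ 𝔰𝔲(2).) -/

import Mathlib

open Finset

/-- Model of the exterior algebra of `(ℝ⁶)*`: an element is given by its coefficients
with respect to the basis monomials `e^S = e^{i₁} ∧ … ∧ e^{i_k}`, `S = {i₁ < … < i_k}`. -/
abbrev E : Type := Finset (Fin 6) → ℝ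

/-- The wedge product in this model: the sign is the parity of the number of
inversions when merging the (sorted) index sets. -/
noncomputable def wedge (a b : E) : E := fun S =>
  ∑ T ∈ S.powerset,
    (-1 : ℝ) ^ (((T ×ˢ (S \ T)).filter (fun p => p.2 < p.1)).card) * a T * b (S \ T)

/-- The basis monomial `e^S`. -/
def bas (S : Finset (Fin 6)) : E := fun T => if T = S then 1 else 0

/-- The volume form `vol = e^{123456}`. -/
noncomputable def vol : E := bas Finset.univ

/-- Interior product (contraction) `v ⌟ a` of a vector `v ∈ ℝ⁶` with a form `a`. -/
noncomputable def contr (v : Fin 6 → ℝ) (a : E) : E := fun S =>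
  ∑ i : Fin 6,
    if i ∈ S then 0
    else (-1 : ℝ) ^ ((S.filter (fun s => s < i)).card) * v i * a (insert i S)

/-- `a` is a `k`-form, i.e. concentrated in degree `k`. -/
def IsForm (k : ℕ) (a : E) : Prop := ∀ S, S.card ≠ k → a S = 0

/-- The differential on the generators (`0`-indexed): `de¹ = e²³`, `de² = e³¹ = -e¹³`,
`de³ = e¹²`, `de⁴ = e⁵⁶`, `de⁵ = e⁶⁴ = -e⁴⁶`, `de⁶ = e⁴⁵`
(the structure constants of `𝔰𝔲(2) ⊕ 𝔰𝔲(2)`). -/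
noncomputable def dgen : Fin 6 → E := fun i =>
  if i = 0 then bas {1, 2}
  else if i = 1 then -bas {0, 2}
  else if i = 2 then bas {0, 1}
  else if i = 3 then bas {4, 5}
  else if i = 4 then -bas {3, 5}
  else bas {3, 4}

/-- The Chevalley–Eilenberg differential: the unique degree `+1` antiderivation of the
exterior algebra extending `dgen`; on a basis monomial `e^S`, `S = {i₁ < … < i_k}`, it is
`d(e^S) = ∑ₜ (-1)^{t-1} e^{S \ {i_t}} ∧ d(e^{i_t})`, extended linearly. -/
noncomputable def d (a : E) : E :=
  ∑ S : Finset (Fin 6), ∑ t ∈ S,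
    (a S * (-1 : ℝ) ^ ((S.filter (fun s => s < t)).card)) • wedge (bas (S.erase t)) (dgen t)

/-- `K` is the matrix of the linear map `K_ρ` associated to the 3-form `ρ`,
characterised by `(v ⌟ ρ) ∧ ρ = K_ρ(v) ⌟ vol` for all `v`. -/
def IsKrho (ρ : E) (K : Matrix (Fin 6) (Fin 6) ℝ) : Prop :=
  ∀ v : Fin 6 → ℝ, wedge (contr v ρ) ρ = contr (K.mulVec v) vol

/-- The quartic invariant `λ(ρ) = (1/6)·tr(K_ρ ∘ K_ρ)`, expressed via `K = K_ρ`. -/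
noncomputable def lamK (K : Matrix (Fin 6) (Fin 6) ℝ) : ℝ := (1 / 6 : ℝ) * (K * K).trace

/-- `J_ρ = K_ρ / √|λ(ρ)|`, expressed via `K = K_ρ`. -/
noncomputable def Jmat (K : Matrix (Fin 6) (Fin 6) ℝ) : Matrix (Fin 6) (Fin 6) ℝ :=
  (Real.sqrt |lamK K|)⁻¹ • K

/-- `ψ⁺ := (1/3) dω`. -/
noncomputable def psiP (ω : E) : E := (3 : ℝ)⁻¹ • d ω

/-- `ω = α(e¹⁴ + e²⁵ + e³⁶)`. -/
noncomputable def omegaA (α : ℝ) : E := α • (bas {0, 3} + bas {1, 4} + bas {2, 5})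

/-! `wedge`, `contr` and `d` are the real instances of formulas that make sense over any
commutative ring and commute with ring homomorphisms. Since `dω = α ψ` for a 3-form `ψ` with
integer coefficients, `ψ⁺ = (α/3) ψ` and `K_{ψ⁺} = (α/3)² K_ψ`, where `K_ψ` is an integer matrix
computed by evaluation over `ℤ`: in blocks of size 3 it is `[[I, -2I], [2I, -I]]`. Hence
`K_ψ² = -3` and `λ(ψ⁺) = (α/3)⁴ · tr(K_ψ²) / 6 = -α⁴/27`. -/

section CoefficientRing

variable {R R' : Type*} [CommRing R] [CommRing R']

def wedgeOver (a b : Finset (Fin 6) → R) : Finset (Fin 6) → R := fun S =>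
  ∑ T ∈ S.powerset,
    (-1 : R) ^ (((T ×ˢ (S \ T)).filter (fun p => p.2 < p.1)).card) * a T * b (S \ T)

def contrOver (v : Fin 6 → R) (a : Finset (Fin 6) → R) : Finset (Fin 6) → R := fun S =>
  ∑ i : Fin 6,
    if i ∈ S then 0
    else (-1 : R) ^ ((S.filter (fun s => s < i)).card) * v i * a (insert i S)

def basOver (S : Finset (Fin 6)) : Finset (Fin 6) → R := fun T => if T = S then 1 else 0

def dgenOver : Fin 6 → Finset (Fin 6) → R := fun i =>
  if i = 0 then basOver {1, 2}
  else if i = 1 then -basOver {0, 2}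
  else if i = 2 then basOver {0, 1}
  else if i = 3 then basOver {4, 5}
  else if i = 4 then -basOver {3, 5}
  else basOver {3, 4}

def dOver (a : Finset (Fin 6) → R) : Finset (Fin 6) → R :=
  ∑ S : Finset (Fin 6), ∑ t ∈ S,
    (a S * (-1 : R) ^ ((S.filter (fun s => s < t)).card)) •
      wedgeOver (basOver (S.erase t)) (dgenOver t)

theorem wedge_eq_wedgeOver : wedge = wedgeOver := rfl

theorem contr_eq_contrOver : contr = contrOver := rfl

theorem d_eq_dOver : d = dOver := rfl

theorem wedgeOver_smul_left (c : R) (a b : Finset (Fin 6) → R) :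
    wedgeOver (c • a) b = c • wedgeOver a b := by
  ext S
  simp only [wedgeOver, Pi.smul_apply, smul_eq_mul, Finset.mul_sum]
  exact Finset.sum_congr rfl fun T _ => by ring

theorem wedgeOver_smul_right (c : R) (a b : Finset (Fin 6) → R) :
    wedgeOver a (c • b) = c • wedgeOver a b := by
  ext S
  simp only [wedgeOver, Pi.smul_apply, smul_eq_mul, Finset.mul_sum]
  exact Finset.sum_congr rfl fun T _ => by ring

theorem contrOver_smul (v : Fin 6 → R) (c : R) (a : Finset (Fin 6) → R) :
    contrOver v (c • a) = c • contrOver v a := by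
  ext S
  simp only [contrOver, Pi.smul_apply, smul_eq_mul, Finset.mul_sum]
  refine Finset.sum_congr rfl fun i _ => ?_
  split_ifs <;> ring

theorem dOver_smul (c : R) (a : Finset (Fin 6) → R) : dOver (c • a) = c • dOver a := by
  simp only [dOver, Finset.smul_sum, smul_smul, Pi.smul_apply, smul_eq_mul, mul_assoc]

theorem dOver_add (a b : Finset (Fin 6) → R) : dOver (a + b) = dOver a + dOver b := by
  simp only [dOver, ← Finset.sum_add_distrib, ← add_smul, Pi.add_apply, add_mul]

theorem dOver_basOver (S₀ : Finset (Fin 6)) :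
    dOver (basOver S₀ : Finset (Fin 6) → R) = ∑ t ∈ S₀,
      (-1 : R) ^ ((S₀.filter (fun s => s < t)).card) •
        wedgeOver (basOver (S₀.erase t)) (dgenOver t) := by
  rw [dOver, Fintype.sum_eq_single S₀ fun S hS => by simp [basOver, hS]]
  simp [basOver]

theorem map_wedgeOver (f : R →+* R') (a b : Finset (Fin 6) → R) (S : Finset (Fin 6)) :
    f (wedgeOver a b S) = wedgeOver (f ∘ a) (f ∘ b) S := by
  simp [wedgeOver]

theorem map_contrOver (f : R →+* R') (v : Fin 6 → R) (a : Finset (Fin 6) → R)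
    (S : Finset (Fin 6)) : f (contrOver v a S) = contrOver (f ∘ v) (f ∘ a) S := by
  simp [contrOver, apply_ite f]

theorem comp_basOver (f : R →+* R') (S : Finset (Fin 6)) : f ∘ basOver S = basOver S := by
  ext T
  simp [basOver, apply_ite f]

theorem comp_dgenOver (f : R →+* R') (t : Fin 6) : f ∘ dgenOver t = dgenOver t := by
  ext T
  simp only [dgenOver]
  split_ifs <;> simp [basOver, apply_ite f]

theorem map_dOver (f : R →+* R') (a : Finset (Fin 6) → R) (S : Finset (Fin 6)) :
    f (dOver a S) = dOver (f ∘ a) S := by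
  simp [dOver, Finset.sum_apply, map_wedgeOver, comp_basOver, comp_dgenOver]

end CoefficientRing

theorem wedge_contr_single_smul_intCast (j : Fin 6) (c : ℝ) (ψ : Finset (Fin 6) → ℤ) :
    wedge (contr (Pi.single j 1) (c • (Int.castRingHom ℝ ∘ ψ))) (c • (Int.castRingHom ℝ ∘ ψ)) =
      c ^ 2 • (Int.castRingHom ℝ ∘ wedgeOver (contrOver (Pi.single j 1) ψ) ψ) := by
  have hsingle : (Pi.single j 1 : Fin 6 → ℝ) = Int.castRingHom ℝ ∘ Pi.single j 1 := by
    ext k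
    by_cases hk : k = j <;> simp [hk]
  rw [wedge_eq_wedgeOver, contr_eq_contrOver, contrOver_smul, wedgeOver_smul_left,
    wedgeOver_smul_right, smul_smul, ← sq, hsingle]
  congr 1
  ext S
  rw [Function.comp_apply, map_wedgeOver]
  congr 1
  exact (funext (map_contrOver _ _ _)).symm

theorem contr_vol_univ_erase (w : Fin 6 → ℝ) (i : Fin 6) :
    contr w vol (Finset.univ.erase i) = (-1 : ℝ) ^ (i : ℕ) * w i := by
  have hcard : ((Finset.univ.erase i).filter (fun s => s < i)).card = (i : ℕ) := by
    fin_cases i <;> decide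
  rw [contr, Fintype.sum_eq_single i fun x hx => by simp [hx]]
  simp [hcard, vol, bas]

theorem IsKrho.apply_eq {ρ : E} {K : Matrix (Fin 6) (Fin 6) ℝ} (hK : IsKrho ρ K) (i j : Fin 6) :
    K i j = (-1 : ℝ) ^ (i : ℕ) * wedge (contr (Pi.single j 1) ρ) ρ (Finset.univ.erase i) := by
  rw [hK, contr_vol_univ_erase, Matrix.mulVec_single_one, ← mul_assoc, ← mul_pow]
  simp

theorem lamK_smul (c : ℝ) (M : Matrix (Fin 6) (Fin 6) ℝ) : lamK (c • M) = c ^ 2 * lamK M := by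
  simp only [lamK, Matrix.smul_mul, Matrix.mul_smul, Matrix.trace_smul, smul_eq_mul]
  ring

theorem lamK_map_intCast (M : Matrix (Fin 6) (Fin 6) ℤ) :
    lamK (M.map (Int.cast : ℤ → ℝ)) = (1 / 6 : ℝ) * (M * M).trace := by
  simp [lamK, Matrix.trace, Matrix.mul_apply]

def omegaZ : Finset (Fin 6) → ℤ := basOver {0, 3} + basOver {1, 4} + basOver {2, 5}

def psiZ : Finset (Fin 6) → ℤ :=
  basOver {0, 1, 5} + basOver {1, 2, 3} + basOver {1, 3, 5} -
    basOver {0, 2, 4} - basOver {0, 4, 5} - basOver {2, 3, 4}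

theorem dOver_omegaZ : dOver omegaZ = psiZ := by
  rw [omegaZ, dOver_add, dOver_add, dOver_basOver, dOver_basOver, dOver_basOver]
  decide +kernel

theorem psiP_omegaA (α : ℝ) : psiP (omegaA α) = (α / 3) • (Int.castRingHom ℝ ∘ psiZ) := by
  have hω : omegaA α = α • (Int.castRingHom ℝ ∘ omegaZ) := by
    ext S
    simp [omegaA, omegaZ, bas, basOver, apply_ite (Int.cast : ℤ → ℝ)]
  rw [psiP, hω, d_eq_dOver, dOver_smul, smul_smul, inv_mul_eq_div]
  congr 1
  ext S
  rw [Function.comp_apply, ← dOver_omegaZ, map_dOver]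

def kMatrixZ : Matrix (Fin 6) (Fin 6) ℤ := Matrix.of fun i j =>
  (-1) ^ (i : ℕ) * wedgeOver (contrOver (Pi.single j 1) psiZ) psiZ (Finset.univ.erase i)

theorem kMatrixZ_eq : kMatrixZ =
    !![1, 0, 0, -2, 0, 0; 0, 1, 0, 0, -2, 0; 0, 0, 1, 0, 0, -2;
       2, 0, 0, -1, 0, 0; 0, 2, 0, 0, -1, 0; 0, 0, 2, 0, 0, -1] := by
  decide +kernel

theorem trace_kMatrixZ_mul_self : (kMatrixZ * kMatrixZ).trace = -18 := by
  rw [kMatrixZ_eq]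
  decide

theorem IsKrho.eq_smul_kMatrixZ {α : ℝ} {K : Matrix (Fin 6) (Fin 6) ℝ}
    (hK : IsKrho (psiP (omegaA α)) K) : K = (α / 3) ^ 2 • kMatrixZ.map (Int.cast : ℤ → ℝ) := by
  ext i j
  rw [hK.apply_eq, psiP_omegaA, wedge_contr_single_smul_intCast]
  simp only [kMatrixZ, Matrix.smul_apply, Matrix.map_apply, Matrix.of_apply, Pi.smul_apply,
    Function.comp_apply, eq_intCast, smul_eq_mul]
  push_cast
  ring

/-- For `ω = α(e¹⁴ + e²⁵ + e³⁶)` on `𝔰𝔲(2) ⊕ 𝔰𝔲(2)` one has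
`λ((1/3)dω) = -(1/27)α⁴`; in particular `λ((1/3)dω) < 0` for `α ≠ 0`, so there is no
left-invariant nearly para-Kähler structure of non-zero type on Lie groups with Lie
algebra `𝔰𝔲(2) ⊕ 𝔰𝔲(2)`. -/
theorem stmt_10 (α : ℝ) (K : Matrix (Fin 6) (Fin 6) ℝ) (hK : IsKrho (psiP (omegaA α)) K) :
    lamK K = -(1 / 27) * α ^ 4 ∧ (α ≠ 0 → lamK K < 0) := by
  have hlam : lamK K = -(1 / 27) * α ^ 4 := by
    rw [hK.eq_smul_kMatrixZ, lamK_smul, lamK_map_intCast, trace_kMatrixZ_mul_self]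
    push_cast
    ring
  refine ⟨hlam, fun hα => ?_⟩
  have : 0 < α ^ 4 := by positivity
  linarith
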